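/- Let S ⊆ [m] × [n] be a nonempty finite set, and define the 3-way index set S' ⊆ ({1,2} × [m]) × ({1,2} × [n]) × S by S' = { ((ε,p), (ε,q), (p,q)) : ε ∈ {1,2}, (p,q) ∈ S }. Then for every proper 3-coordinate split (a,b) of {1,2,3} (i.e. 3 ∈ a and {3} ⊊ a ⊊ {1,2,3}), the set S' is NOT a coordinate toric fiber product along coordinate 3 with respect to (a,b). -/
import Mathlib


/-- For a `3`-way index set with coordinates indexed by `Fin 3`, the tuples `s` and `t` agree on
all coordinates in `a`. -/
def agreeOn {α β γ : Type*} (a : Finset (Fin 3)) (s t : α × β × γ) : Prop :=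
  ((0 : Fin 3) ∈ a → s.1 = t.1) ∧ ((1 : Fin 3) ∈ a → s.2.1 = t.2.1) ∧
    ((2 : Fin 3) ∈ a → s.2.2 = t.2.2)

/-- A `3`-way index set `T` is a *coordinate toric fiber product* with respect to the coordinate
sets `(a, b)` if `T = { s | π_a(s) ∈ π_a(T) and π_b(s) ∈ π_b(T) }`. -/
def IsCTFP3 {α β γ : Type*} (T : Finset (α × β × γ)) (a b : Finset (Fin 3)) : Prop :=
  ∀ s : α × β × γ, s ∈ T ↔ ((∃ t ∈ T, agreeOn a s t) ∧ (∃ u ∈ T, agreeOn b s u))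

/-- The `3`-way index set of the (modified) Lawrence lift of `S ⊆ [m] × [n]`:
`S' = { ((ε,p), (ε,q), (p,q)) : ε ∈ {1,2}, (p,q) ∈ S }`. -/
def lawrenceLift {m n : ℕ} (S : Finset (Fin m × Fin n)) :
    Finset ((Fin 2 × Fin m) × (Fin 2 × Fin n) × {p : Fin m × Fin n // p ∈ S}) :=
  Finset.univ.image fun e : Fin 2 × {p : Fin m × Fin n // p ∈ S} =>
    ((e.1, e.2.1.1), (e.1, e.2.1.2), e.2)

/-- For every proper split `(a, b)` along the third coordinate (here indexed
by `2 : Fin 3`), the Lawrence lift index set `S'` is *not* a cTFP along the third coordinate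
with respect to `(a, b)`. -/
theorem stmt10 {m n : ℕ} (S : Finset (Fin m × Fin n)) (hS : S.Nonempty) :
    ∀ a : Finset (Fin 3), {(2 : Fin 3)} ⊂ a → a ⊂ Finset.univ →
      ¬ IsCTFP3 (lawrenceLift S) a ((Finset.univ \ a) ∪ {(2 : Fin 3)}) := by
  obtain ⟨⟨p, q⟩, hpq⟩ := hS
  intro a ha1 ha2 h
  have h2a : (2 : Fin 3) ∈ a := ha1.1 (Finset.mem_singleton_self 2)
  have hmem : ∀ ε : Fin 2, ((ε, p), (ε, q), (⟨(p, q), hpq⟩ : {r // r ∈ S})) ∈ lawrenceLift S := by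
    intro ε
    simp only [lawrenceLift, Finset.mem_image, Finset.mem_univ, true_and]
    exact ⟨(ε, ⟨(p, q), hpq⟩), rfl⟩
  by_cases h0 : (0 : Fin 3) ∈ a
  · have h1 : (1 : Fin 3) ∉ a := by
      intro h1
      exact ha2.2 fun x _ => by fin_cases x <;> assumption
    set s : (Fin 2 × Fin m) × (Fin 2 × Fin n) × {r // r ∈ S} :=
      ((0, p), (1, q), ⟨(p, q), hpq⟩) with hsdef
    have hs : s ∉ lawrenceLift S := by
      simp only [lawrenceLift, Finset.mem_image, Finset.mem_univ, true_and, hsdef]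
      rintro ⟨e, he⟩
      simp only [Prod.ext_iff] at he
      rw [he.1.1] at he
      exact absurd he.2.1.1 (by decide)
    apply hs
    refine (h s).2 ⟨⟨((0, p), (0, q), ⟨(p, q), hpq⟩), hmem 0, ?_⟩,
      ⟨((1, p), (1, q), ⟨(p, q), hpq⟩), hmem 1, ?_⟩⟩
    · exact ⟨fun _ => rfl, fun h1' => absurd h1' h1, fun _ => rfl⟩
    · refine ⟨fun h0b => ?_, fun _ => rfl, fun _ => rfl⟩
      exfalso
      rcases Finset.mem_union.1 h0b with hb | hb
      · exact (Finset.mem_sdiff.1 hb).2 h0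
      · exact absurd (Finset.mem_singleton.1 hb) (by decide)
  · have h1 : (1 : Fin 3) ∈ a := by
      obtain ⟨x, hxa, hx2⟩ := Finset.exists_of_ssubset ha1
      rw [Finset.mem_singleton] at hx2
      fin_cases x
      · exact absurd hxa h0
      · exact hxa
      · exact absurd rfl hx2
    set s : (Fin 2 × Fin m) × (Fin 2 × Fin n) × {r // r ∈ S} :=
      ((1, p), (0, q), ⟨(p, q), hpq⟩) with hsdef
    have hs : s ∉ lawrenceLift S := by
      simp only [lawrenceLift, Finset.mem_image, Finset.mem_univ, true_and, hsdef]
      rintro ⟨e, he⟩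
      simp only [Prod.ext_iff] at he
      rw [he.1.1] at he
      exact absurd he.2.1.1 (by decide)
    apply hs
    refine (h s).2 ⟨⟨((0, p), (0, q), ⟨(p, q), hpq⟩), hmem 0, ?_⟩,
      ⟨((1, p), (1, q), ⟨(p, q), hpq⟩), hmem 1, ?_⟩⟩
    · exact ⟨fun h0' => absurd h0' h0, fun _ => rfl, fun _ => rfl⟩
    · refine ⟨fun _ => rfl, fun h1b => ?_, fun _ => rfl⟩
      exfalso
      rcases Finset.mem_union.1 h1b with hb | hb
      · exact (Finset.mem_sdiff.1 hb).2 h1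
      · exact absurd (Finset.mem_singleton.1 hb) (by decide)
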